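/- The kernel of the homomorphism Φ is {1, -1}: an element p ∈ Spin(3,1) satisfies p·q·(hat(p))⁻¹ = q for all q ∈ V = {q ∈ H^C : q = -hat(conj(q))} if and only if p = 1 or p = -1. -/

import Mathlib

open Quaternion

noncomputable section

/-- The "hat" involution on complexified quaternions: complex-conjugate each coefficient. -/
def hatQ (q : ℍ[ℂ]) : ℍ[ℂ] :=
  ⟨(starRingEnd ℂ) q.re, (starRingEnd ℂ) q.imI, (starRingEnd ℂ) q.imJ, (starRingEnd ℂ) q.imK⟩

/-- Quaternionic conjugation: negate the I, J, K components. -/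
def conjQ (q : ℍ[ℂ]) : ℍ[ℂ] := ⟨q.re, -q.imI, -q.imJ, -q.imK⟩

/-- The complex bilinear form H(q,q') = q1q1' + q2q2' + q3q3' + q4q4'. -/
def Hform (p q : ℍ[ℂ]) : ℂ := p.re * q.re + p.imI * q.imI + p.imJ * q.imJ + p.imK * q.imK

def Iq : ℍ[ℂ] := ⟨0,1,0,0⟩
def Jq : ℍ[ℂ] := ⟨0,0,1,0⟩
def Kq : ℍ[ℂ] := ⟨0,0,0,1⟩

/-! Since `conj q * q = H(q,q)`, for `H(p,p) = 1` the element `conj (hat p)` is the inverse of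
`hat p`, so `p` fixes `q` exactly when `p q = q hat(p)`. The vectors `I, J, K` lie in `V`, and this
twisted commutation with `I`, `J`, `K` forces every imaginary coefficient of `p` to be both real and
purely imaginary, hence zero. So `p` is a scalar with `p² = 1`. -/

theorem conjQ_eq_star (q : ℍ[ℂ]) : conjQ q = star q := by
  ext <;> simp [conjQ]

theorem Hform_self_eq_normSq (q : ℍ[ℂ]) : Hform q q = normSq q := by
  rw [normSq_def', Hform]
  ring

theorem Hform_hatQ (q : ℍ[ℂ]) : Hform (hatQ q) (hatQ q) = starRingEnd ℂ (Hform q q) := by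
  simp [Hform, hatQ]

theorem hatQ_one : hatQ 1 = 1 := by
  ext <;> simp [hatQ]

theorem hatQ_neg_one : hatQ (-1) = -1 := by
  ext <;> simp [hatQ]

theorem mul_mul_conjQ_hatQ_eq_iff {p : ℍ[ℂ]} (hp : Hform p p = 1) (q : ℍ[ℂ]) :
    p * q * conjQ (hatQ p) = q ↔ p * q = q * hatQ p := by
  have hhat : Hform (hatQ p) (hatQ p) = 1 := by rw [Hform_hatQ, hp, map_one]
  rw [Hform_self_eq_normSq] at hhat
  constructor
  · intro h
    calc p * q = p * q * (conjQ (hatQ p) * hatQ p) := by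
          rw [conjQ_eq_star, star_mul_self, hhat, coe_one, mul_one]
      _ = q * hatQ p := by rw [← mul_assoc, h]
  · intro h
    rw [h, mul_assoc, conjQ_eq_star, self_mul_star, hhat, coe_one, mul_one]

theorem Iq_eq_neg_hatQ_conjQ : Iq = -hatQ (conjQ Iq) := by
  ext <;> simp only [Quaternion.re_neg, Quaternion.imI_neg, Quaternion.imJ_neg, Quaternion.imK_neg]
    <;> simp [Iq, hatQ, conjQ]

theorem Jq_eq_neg_hatQ_conjQ : Jq = -hatQ (conjQ Jq) := by
  ext <;> simp only [Quaternion.re_neg, Quaternion.imI_neg, Quaternion.imJ_neg, Quaternion.imK_neg]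
    <;> simp [Jq, hatQ, conjQ]

theorem Kq_eq_neg_hatQ_conjQ : Kq = -hatQ (conjQ Kq) := by
  ext <;> simp only [Quaternion.re_neg, Quaternion.imI_neg, Quaternion.imJ_neg, Quaternion.imK_neg]
    <;> simp [Kq, hatQ, conjQ]

theorem mul_Iq_eq_Iq_mul_hatQ_iff (p : ℍ[ℂ]) :
    p * Iq = Iq * hatQ p ↔ starRingEnd ℂ p.re = p.re ∧ starRingEnd ℂ p.imI = p.imI ∧
      starRingEnd ℂ p.imJ = -p.imJ ∧ starRingEnd ℂ p.imK = -p.imK := by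
  simp only [Quaternion.ext_iff, Quaternion.re_mul, Quaternion.imI_mul, Quaternion.imJ_mul,
    Quaternion.imK_mul]
  simp [Iq, hatQ, eq_comm, neg_eq_iff_eq_neg]
  tauto

theorem mul_Jq_eq_Jq_mul_hatQ_iff (p : ℍ[ℂ]) :
    p * Jq = Jq * hatQ p ↔ starRingEnd ℂ p.re = p.re ∧ starRingEnd ℂ p.imI = -p.imI ∧
      starRingEnd ℂ p.imJ = p.imJ ∧ starRingEnd ℂ p.imK = -p.imK := by
  simp only [Quaternion.ext_iff, Quaternion.re_mul, Quaternion.imI_mul, Quaternion.imJ_mul,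
    Quaternion.imK_mul]
  simp [Jq, hatQ, eq_comm, neg_eq_iff_eq_neg]
  tauto

theorem mul_Kq_eq_Kq_mul_hatQ_iff (p : ℍ[ℂ]) :
    p * Kq = Kq * hatQ p ↔ starRingEnd ℂ p.re = p.re ∧ starRingEnd ℂ p.imI = -p.imI ∧
      starRingEnd ℂ p.imJ = -p.imJ ∧ starRingEnd ℂ p.imK = p.imK := by
  simp only [Quaternion.ext_iff, Quaternion.re_mul, Quaternion.imI_mul, Quaternion.imJ_mul,
    Quaternion.imK_mul]
  simp [Kq, hatQ, eq_comm, neg_eq_iff_eq_neg]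
  tauto

theorem eq_zero_of_conj_eq_self_of_conj_eq_neg {z : ℂ} (hre : starRingEnd ℂ z = z)
    (him : starRingEnd ℂ z = -z) : z = 0 :=
  self_eq_neg.mp (hre.symm.trans him)

theorem eq_one_or_eq_neg_one_of_Hform {p : ℍ[ℂ]} (hI : p.imI = 0) (hJ : p.imJ = 0)
    (hK : p.imK = 0) (hp : Hform p p = 1) : p = 1 ∨ p = -1 := by
  have hre : p.re * p.re = 1 := by simpa [Hform, hI, hJ, hK] using hp
  rcases mul_self_eq_one_iff.mp hre with h | h
  · left
    ext <;> simp [h, hI, hJ, hK]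
  · right
    ext <;> simp [h, hI, hJ, hK]

theorem Phi_kernel (p : ℍ[ℂ]) (hp : Hform p p = 1) :
    (∀ q : ℍ[ℂ], q = -hatQ (conjQ q) → p * q * conjQ (hatQ p) = q) ↔
      p = 1 ∨ p = -1 := by
  simp only [mul_mul_conjQ_hatQ_eq_iff hp]
  constructor
  · intro h
    obtain ⟨-, hIb, hIc, hId⟩ := (mul_Iq_eq_Iq_mul_hatQ_iff p).mp (h Iq Iq_eq_neg_hatQ_conjQ)
    obtain ⟨-, hJb, hJc, -⟩ := (mul_Jq_eq_Jq_mul_hatQ_iff p).mp (h Jq Jq_eq_neg_hatQ_conjQ)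
    obtain ⟨-, -, -, hKd⟩ := (mul_Kq_eq_Kq_mul_hatQ_iff p).mp (h Kq Kq_eq_neg_hatQ_conjQ)
    exact eq_one_or_eq_neg_one_of_Hform (eq_zero_of_conj_eq_self_of_conj_eq_neg hIb hJb)
      (eq_zero_of_conj_eq_self_of_conj_eq_neg hJc hIc)
      (eq_zero_of_conj_eq_self_of_conj_eq_neg hKd hId) hp
  · rintro (rfl | rfl) q -
    · rw [hatQ_one, one_mul, mul_one]
    · rw [hatQ_neg_one]
      exact (Commute.neg_one_left q).eq
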